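/- In a PRF computation under garbage collection, invalid next selectors of cells referenced by valid pointers never hold seg: if σ ∈ gcsem(P) is PRF, pe ∈ valid(σ), heap(σ)(pe) = a ≠ seg, and a.next_i ∉ valid(σ), then heap(σ)(a.next_i) ≠ seg. -/
import Mathlib


/-!
A formalization of the framework of Haziza, Holík, Meyer, Wolff,
"Pointer Race Freedom": heaps, concurrent heap-manipulating programs,
the garbage-collected, memory-managed and ownership-respecting semantics,
validity of pointers, (strong) pointer races, and ownership.
-/

namespace PRF

open scoped Classical

noncomputable section

/-- Pointer expressions over addresses `A`, pointer variables `PV`,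
with `n` next-selectors. -/
inductive PExp (A PV : Type) (n : ℕ) : Type where
  | var  : PV → PExp A PV n
  | next : A → Fin n → PExp A PV n

/-- Data expressions over addresses `A` and data variables `DV`. -/
inductive DExp (A DV : Type) : Type where
  | var  : DV → DExp A DV
  | data : A → DExp A DV

/-- Conditions of assert commands: (negated) equalities of pointer or
data variables. -/
inductive Cond (PV DV : Type) : Type where
  | peq : PV → PV → Cond PV DV
  | deq : DV → DV → Cond PV DV
  | not : Cond PV DV → Cond PV DV

/-- Commands of the while-language. -/
inductive Com (D PV DV : Type) (n : ℕ) : Type where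
  | assert    : Cond PV DV → Com D PV DV n
  | malloc    : PV → Com D PV DV n                   -- p := malloc
  | free      : PV → Com D PV DV n                   -- free(p)
  | readNext  : PV → PV → Fin n → Com D PV DV n      -- p := q.next_i
  | writeNext : PV → Fin n → PV → Com D PV DV n      -- p.next_i := q
  | copyP     : PV → PV → Com D PV DV n              -- p := q
  | readData  : DV → PV → Com D PV DV n              -- x := q.data
  | writeData : PV → DV → Com D PV DV n              -- p.data := x
  | opAsgn    : DV → List DV → (List D → D) → Com D PV DV n  -- x := op(x1,…,xk)

/-- A heap: partial valuations of pointer and data expressions. -/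
structure Heap (A D PV DV : Type) (n : ℕ) : Type where
  pval : PExp A PV n → Option A
  dval : DExp A DV → Option D

/-- An update of a heap (applied by overriding where defined). -/
structure Update (A D PV DV : Type) (n : ℕ) : Type where
  pup : PExp A PV n → Option A
  dup : DExp A DV → Option D

/-- An action: an optional (thread, command) pair — `none` only for the
initial base action — together with an update. -/
structure Act (A D PV DV T : Type) (n : ℕ) : Type where
  tc : Option (T × Com D PV DV n)
  up : Update A D PV DV n

/-- The complement of an assert condition. -/
def Cond.negate {PV DV : Type} : Cond PV DV → Cond PV DV
  | .not b => b
  | b => .not b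

/-- Pointer variables occurring in a condition. -/
def Cond.pvars {PV DV : Type} : Cond PV DV → Set PV
  | .peq p q => {p, q}
  | .deq _ _ => ∅
  | .not b => b.pvars

/-- Data variables occurring in a condition. -/
def Cond.dvars {PV DV : Type} : Cond PV DV → Set DV
  | .peq _ _ => ∅
  | .deq x y => {x, y}
  | .not b => b.dvars

/-- Pointer variables used by a command. -/
def Com.pvars {D PV DV : Type} {n : ℕ} : Com D PV DV n → Set PV
  | .assert b => b.pvars
  | .malloc p => {p}
  | .free p => {p}
  | .readNext p q _ => {p, q}
  | .writeNext p _ q => {p, q}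
  | .copyP p q => {p, q}
  | .readData _ q => {q}
  | .writeData p _ => {p}
  | .opAsgn _ _ _ => ∅

/-- Data variables used by a command. -/
def Com.dvars {D PV DV : Type} {n : ℕ} : Com D PV DV n → Set DV
  | .assert b => b.dvars
  | .readData x _ => {x}
  | .writeData _ x => {x}
  | .opAsgn x ys _ => {x} ∪ {y | y ∈ ys}
  | _ => ∅

/-- A concurrent heap-manipulating program: a set of threads `T`, each an
ordinary while-program presented by its control-flow relation `step`;
every variable is shared (`owner = none`) or local to one thread, a thread
uses only shared variables and its own locals, and every control location
offering `assert b` also offers `assert ¬b`. -/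
structure Program (D PV DV T : Type) (n : ℕ) : Type 1 where
  Ctrl : Type
  init : T → Ctrl
  step : T → Ctrl → Com D PV DV n → Ctrl → Prop
  pOwner : PV → Option T
  dOwner : DV → Option T
  assertCompl : ∀ t c b c', step t c (.assert b) c' →
    ∃ c'', step t c (.assert b.negate) c''
  stepPVars : ∀ t c com c', step t c com c' →
    ∀ p ∈ Com.pvars com, pOwner p = none ∨ pOwner p = some t
  stepDVars : ∀ t c com c', step t c com c' →
    ∀ x ∈ Com.dvars com, dOwner x = none ∨ dOwner x = some t

variable {A D PV DV T : Type} {n : ℕ}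

/-- The source address of a pointer expression (`a` for `a.next_i`). -/
def PExp.srcAdr : PExp A PV n → Option A
  | .var _ => none
  | .next a _ => some a

/-- The source address of a data expression (`a` for `a.data`). -/
def DExp.srcAdr : DExp A DV → Option A
  | .var _ => none
  | .data a => some a

/-- The addresses in use in a heap: those occurring in the domain or range
of the pointer valuation or in the domain of the data valuation. -/
def Heap.adr (h : Heap A D PV DV n) : Set A :=
  {a | (∃ pe, h.pval pe ≠ none ∧ PExp.srcAdr pe = some a)
     ∨ (∃ pe, h.pval pe = some a)
     ∨ (∃ de, h.dval de ≠ none ∧ DExp.srcAdr de = some a)}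

/-- Restriction `h|P` of a heap to a set `P` of pointer expressions: keeps
`pval` only on `P`, keeps `dval` on data variables and on `a.data` for the
addresses `a` hit by some pointer expression in `P`. -/
def Heap.restrict (h : Heap A D PV DV n) (P : Set (PExp A PV n)) :
    Heap A D PV DV n where
  pval pe := if pe ∈ P then h.pval pe else none
  dval de := match de with
    | .var x => h.dval (.var x)
    | .data a => if ∃ pe ∈ P, h.pval pe = some a then h.dval (.data a) else none

/-- Applying an update to a heap. -/
def Heap.apply (h : Heap A D PV DV n) (u : Update A D PV DV n) :
    Heap A D PV DV n where
  pval pe := match u.pup pe with | some a => some a | none => h.pval pe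
  dval de := match u.dup de with | some d => some d | none => h.dval de

/-- The totally undefined heap. -/
def Heap.empty : Heap A D PV DV n := ⟨fun _ => none, fun _ => none⟩

/-- `h[pe ↦ a]`. -/
def Heap.pupdate (h : Heap A D PV DV n) (pe : PExp A PV n) (a : A) :
    Heap A D PV DV n :=
  ⟨fun pe' => if pe' = pe then some a else h.pval pe', h.dval⟩

/-- `h[de ↦ d]`. -/
def Heap.dupdate (h : Heap A D PV DV n) (de : DExp A DV) (d : D) :
    Heap A D PV DV n :=
  ⟨h.pval, fun de' => if de' = de then some d else h.dval de'⟩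

/-- The domain of the pointer valuation. -/
def Heap.pdom (h : Heap A D PV DV n) : Set (PExp A PV n) := {pe | h.pval pe ≠ none}

/-- The domain of the data valuation. -/
def Heap.ddom (h : Heap A D PV DV n) : Set (DExp A DV) := {de | h.dval de ≠ none}

/-- heap(τ): the heap resulting from a computation. -/
def heapOf (τ : List (Act A D PV DV T n)) : Heap A D PV DV n :=
  τ.foldl (fun h act => h.apply act.up) Heap.empty

/-- The empty update. -/
def Update.empty : Update A D PV DV n := ⟨fun _ => none, fun _ => none⟩

/-- The singleton pointer update `[pe ↦ a]`. -/
def Update.pt (pe : PExp A PV n) (a : A) : Update A D PV DV n :=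
  ⟨fun pe' => if pe' = pe then some a else none, fun _ => none⟩

/-- The singleton data update `[de ↦ d]`. -/
def Update.dt (de : DExp A DV) (d : D) : Update A D PV DV n :=
  ⟨fun _ => none, fun de' => if de' = de then some d else none⟩

/-- The update of rule (Malloc1): `[p ↦ a, a.data ↦ d, a.next_i ↦ seg]`. -/
def mallocUpdate (seg : A) (p : PV) (a : A) (d : D) : Update A D PV DV n :=
  ⟨fun pe => if pe = PExp.var p then some a
             else if ∃ i, pe = PExp.next a i then some seg else none,
   fun de => if de = DExp.data a then some d else none⟩

/-- The update of the base action: every pointer variable is set to `seg`,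
every data variable to an arbitrary initial value. -/
def baseUpdate (seg : A) (dinit : DV → D) : Update A D PV DV n :=
  ⟨fun pe => match pe with | .var _ => some seg | _ => none,
   fun de => match de with | .var x => some (dinit x) | _ => none⟩

/-- Satisfaction of a condition (with polarity); an assertion and its
negation both pass when an involved pointer holds `seg`. -/
def condSat (seg : A) (h : Heap A D PV DV n) : Bool → Cond PV DV → Prop
  | pol, .not b => condSat seg h (!pol) b
  | pol, .peq p q =>
      (if pol then h.pval (.var p) = h.pval (.var q)
       else h.pval (.var p) ≠ h.pval (.var q))
      ∨ h.pval (.var p) = some seg ∨ h.pval (.var q) = some seg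
  | pol, .deq x y =>
      if pol then h.dval (.var x) = h.dval (.var y)
      else h.dval (.var x) ≠ h.dval (.var y)

/-- One step of the freed-addresses bookkeeping. -/
def freedStep (seg : A) (h : Heap A D PV DV n) (F : Set A)
    (act : Act A D PV DV T n) : Set A :=
  match act.tc with
  | some (_, .free p) =>
      match h.pval (.var p) with
      | some a => if a = seg then F else insert a F
      | none => F
  | some (_, .malloc p) =>
      match act.up.pup (.var p) with
      | some a => F \ {a}
      | none => F
  | _ => F

def freedAux (seg : A) : Heap A D PV DV n → Set A → List (Act A D PV DV T n) → Set A
  | _, F, [] => F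
  | h, F, act :: τ => freedAux seg (h.apply act.up) (freedStep seg h F act) τ

/-- freed(τ): addresses freed and not re-allocated since. -/
def freedOf (seg : A) (τ : List (Act A D PV DV T n)) : Set A :=
  freedAux seg Heap.empty ∅ τ

/-- invalid(a): the pointer expressions invalidated by freeing `a`. -/
def invalidOf (h : Heap A D PV DV n) (a : A) : Set (PExp A PV n) :=
  {pe | h.pval pe = some a} ∪ {pe | ∃ i, pe = PExp.next a i}

/-- One step of the validity bookkeeping. -/
def validStep (seg : A) (h : Heap A D PV DV n) (V : Set (PExp A PV n))
    (act : Act A D PV DV T n) : Set (PExp A PV n) :=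
  match act.tc with
  | some (_, .free p) =>
      match h.pval (.var p) with
      | some a => if a = seg then V else V \ invalidOf h a
      | none => V
  | some (_, .copyP p q) =>
      if PExp.var q ∈ V then insert (PExp.var p) V else V \ {PExp.var p}
  | some (_, .readNext p q i) =>
      match h.pval (.var q) with
      | some a => if PExp.next a i ∈ V then insert (PExp.var p) V else V \ {PExp.var p}
      | none => V \ {PExp.var p}
  | some (_, .writeNext p i q) =>
      match h.pval (.var p) with
      | some a => if PExp.var q ∈ V then insert (PExp.next a i) V else V \ {PExp.next a i}
      | none => V
  | some (_, .malloc p) =>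
      match act.up.pup (.var p) with
      | some a =>
          insert (PExp.var p) V ∪
            {pe | ∃ i, pe = PExp.next a i ∧ act.up.pup (PExp.next a i) ≠ none}
      | none => V
  | _ => V

def validAux (seg : A) : Heap A D PV DV n → Set (PExp A PV n) →
    List (Act A D PV DV T n) → Set (PExp A PV n)
  | _, V, [] => V
  | h, V, act :: τ => validAux seg (h.apply act.up) (validStep seg h V act) τ

/-- valid(τ): the valid pointer expressions after a computation; initially
all pointer variables are valid. -/
def validOf (seg : A) (τ : List (Act A D PV DV T n)) : Set (PExp A PV n) :=
  validAux seg Heap.empty {pe | ∃ p, pe = PExp.var p} τ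

/-- One step of the strong-invalidity bookkeeping: a variable becomes
strongly invalid when its value is obtained by dereferencing an invalid
pointer; strong invalidity is propagated by assignments. -/
def sinvStep (h : Heap A D PV DV n) (V : Set (PExp A PV n)) (S : Set (PV ⊕ DV))
    (act : Act A D PV DV T n) : Set (PV ⊕ DV) :=
  match act.tc with
  | some (_, .readNext p q _) =>
      if PExp.var q ∈ V then S \ {Sum.inl p} else insert (Sum.inl p) S
  | some (_, .readData x q) =>
      if PExp.var q ∈ V then S \ {Sum.inr x} else insert (Sum.inr x) S
  | some (_, .copyP p q) =>
      if Sum.inl q ∈ S then insert (Sum.inl p) S else S \ {Sum.inl p}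
  | some (_, .opAsgn x ys _) =>
      if ∃ y ∈ ys, Sum.inr y ∈ S then insert (Sum.inr x) S else S \ {Sum.inr x}
  | some (_, .malloc p) => S \ {Sum.inl p}
  | _ => S

def sinvAux (seg : A) : Heap A D PV DV n → Set (PExp A PV n) → Set (PV ⊕ DV) →
    List (Act A D PV DV T n) → Set (PV ⊕ DV)
  | _, _, S, [] => S
  | h, V, S, act :: τ =>
      sinvAux seg (h.apply act.up) (validStep seg h V act) (sinvStep h V S act) τ

/-- The strongly invalid variables after a computation. -/
def sinvOf (seg : A) (τ : List (Act A D PV DV T n)) : Set (PV ⊕ DV) :=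
  sinvAux seg Heap.empty {pe | ∃ p, pe = PExp.var p} ∅ τ

/-- An assignment command publishes the owned address `a` if it copies `a`
via a valid pointer into a shared variable, a variable of another thread,
or into the heap outside the owner's cells. -/
def publishedBy (P : Program D PV DV T n) (h : Heap A D PV DV n)
    (V : Set (PExp A PV n)) (W : A → Option T) (com : Com D PV DV n) (a : A) :
    Prop :=
  ∃ t', W a = some t' ∧
    ((∃ p q, com = .copyP p q ∧ PExp.var q ∈ V ∧ h.pval (.var q) = some a ∧
        P.pOwner p ≠ some t')
     ∨ (∃ p q i b, com = .readNext p q i ∧ h.pval (.var q) = some b ∧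
        PExp.next b i ∈ V ∧ h.pval (.next b i) = some a ∧ P.pOwner p ≠ some t')
     ∨ (∃ p i q b, com = .writeNext p i q ∧ PExp.var q ∈ V ∧
        h.pval (.var q) = some a ∧ h.pval (.var p) = some b ∧ W b ≠ some t'))

/-- One step of the ownership bookkeeping: a thread owns an address it
allocated (into one of its local variables) by the most recent allocation,
until the address is freed or published. -/
def ownedStep (seg : A) (P : Program D PV DV T n) (h : Heap A D PV DV n)
    (V : Set (PExp A PV n)) (W : A → Option T) (act : Act A D PV DV T n) :
    A → Option T := fun a =>
  match act.tc with
  | some (t, .malloc p) =>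
      match act.up.pup (.var p) with
      | some b => if a = b then (if P.pOwner p = some t then some t else none) else W a
      | none => W a
  | some (_, .free p) =>
      match h.pval (.var p) with
      | some b => if a = b ∧ b ≠ seg then none else W a
      | none => W a
  | some (_, com) => if publishedBy P h V W com a then none else W a
  | none => W a

def ownedAux (seg : A) (P : Program D PV DV T n) :
    Heap A D PV DV n → Set (PExp A PV n) → (A → Option T) →
      List (Act A D PV DV T n) → (A → Option T)
  | _, _, W, [] => W
  | h, V, W, act :: τ =>
      ownedAux seg P (h.apply act.up) (validStep seg h V act)
        (ownedStep seg P h V W act) τ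

/-- owned(·, τ) as a map from addresses to their owning thread, if any. -/
def ownedOf (seg : A) (P : Program D PV DV T n) (τ : List (Act A D PV DV T n)) :
    A → Option T :=
  ownedAux seg P Heap.empty {pe | ∃ p, pe = PExp.var p} (fun _ => none) τ

/-- The operational semantics: `mm = false` gives the garbage-collected
semantics (only rule (Malloc1)), `mm = true` additionally enables (Malloc2). -/
inductive Sem (seg : A) (P : Program D PV DV T n) (mm : Bool) :
    List (Act A D PV DV T n) → (T → P.Ctrl) → Prop where
  | base (dinit : DV → D) :
      Sem seg P mm [⟨none, baseUpdate seg dinit⟩] P.init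
  | assert {τ ctrl} (t : T) (b : Cond PV DV) (c' : P.Ctrl) :
      Sem seg P mm τ ctrl →
      P.step t (ctrl t) (.assert b) c' →
      condSat seg (heapOf τ) true b →
      Sem seg P mm (τ ++ [⟨some (t, .assert b), Update.empty⟩])
        (Function.update ctrl t c')
  | free {τ ctrl} (t : T) (p : PV) (c' : P.Ctrl) :
      Sem seg P mm τ ctrl →
      P.step t (ctrl t) (.free p) c' →
      Sem seg P mm (τ ++ [⟨some (t, .free p), Update.empty⟩])
        (Function.update ctrl t c')
  | copyP {τ ctrl} (t : T) (p q : PV) (c' : P.Ctrl) (b : A) :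
      Sem seg P mm τ ctrl →
      P.step t (ctrl t) (.copyP p q) c' →
      (heapOf τ).pval (.var q) = some b →
      Sem seg P mm (τ ++ [⟨some (t, .copyP p q), Update.pt (.var p) b⟩])
        (Function.update ctrl t c')
  | readNext {τ ctrl} (t : T) (p q : PV) (i : Fin n) (c' : P.Ctrl) (a b : A) :
      Sem seg P mm τ ctrl →
      P.step t (ctrl t) (.readNext p q i) c' →
      (heapOf τ).pval (.var q) = some a → a ≠ seg →
      (heapOf τ).pval (.next a i) = some b →
      Sem seg P mm (τ ++ [⟨some (t, .readNext p q i), Update.pt (.var p) b⟩])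
        (Function.update ctrl t c')
  | writeNext {τ ctrl} (t : T) (p : PV) (i : Fin n) (q : PV) (c' : P.Ctrl) (a b : A) :
      Sem seg P mm τ ctrl →
      P.step t (ctrl t) (.writeNext p i q) c' →
      (heapOf τ).pval (.var p) = some a → a ≠ seg →
      (heapOf τ).pval (.var q) = some b →
      Sem seg P mm (τ ++ [⟨some (t, .writeNext p i q), Update.pt (.next a i) b⟩])
        (Function.update ctrl t c')
  | readData {τ ctrl} (t : T) (x : DV) (q : PV) (c' : P.Ctrl) (a : A) (d : D) :
      Sem seg P mm τ ctrl →
      P.step t (ctrl t) (.readData x q) c' →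
      (heapOf τ).pval (.var q) = some a → a ≠ seg →
      (heapOf τ).dval (.data a) = some d →
      Sem seg P mm (τ ++ [⟨some (t, .readData x q), Update.dt (.var x) d⟩])
        (Function.update ctrl t c')
  | writeData {τ ctrl} (t : T) (q : PV) (x : DV) (c' : P.Ctrl) (a : A) (d : D) :
      Sem seg P mm τ ctrl →
      P.step t (ctrl t) (.writeData q x) c' →
      (heapOf τ).pval (.var q) = some a → a ≠ seg →
      (heapOf τ).dval (.var x) = some d →
      Sem seg P mm (τ ++ [⟨some (t, .writeData q x), Update.dt (.data a) d⟩])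
        (Function.update ctrl t c')
  | opAsgn {τ ctrl} (t : T) (x : DV) (ys : List DV) (op : List D → D)
      (c' : P.Ctrl) (ds : List D) :
      Sem seg P mm τ ctrl →
      P.step t (ctrl t) (.opAsgn x ys op) c' →
      ys.mapM (fun y => (heapOf τ).dval (.var y)) = some ds →
      Sem seg P mm (τ ++ [⟨some (t, .opAsgn x ys op), Update.dt (.var x) (op ds)⟩])
        (Function.update ctrl t c')
  | malloc1 {τ ctrl} (t : T) (p : PV) (c' : P.Ctrl) (a : A) (d : D) :
      Sem seg P mm τ ctrl →
      P.step t (ctrl t) (.malloc p) c' →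
      a ∉ (heapOf τ).adr →
      Sem seg P mm (τ ++ [⟨some (t, .malloc p), mallocUpdate seg p a d⟩])
        (Function.update ctrl t c')
  | malloc2 {τ ctrl} (t : T) (p : PV) (c' : P.Ctrl) (a : A) :
      mm = true →
      Sem seg P mm τ ctrl →
      P.step t (ctrl t) (.malloc p) c' →
      a ∈ freedOf seg τ →
      Sem seg P mm (τ ++ [⟨some (t, .malloc p), Update.pt (.var p) a⟩])
        (Function.update ctrl t c')

/-- The garbage-collected semantics gcsem(P). -/
def gcsem (seg : A) (P : Program D PV DV T n) : Set (List (Act A D PV DV T n)) :=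
  {τ | ∃ ctrl, Sem seg P false τ ctrl}

/-- The memory-managed semantics mmsem(P). -/
def mmsem (seg : A) (P : Program D PV DV T n) : Set (List (Act A D PV DV T n)) :=
  {τ | ∃ ctrl, Sem seg P true τ ctrl}

/-- The pointer variables a command frees, dereferences, or uses in an
assertion. -/
def racyVars {D PV DV : Type} {n : ℕ} : Com D PV DV n → Set PV
  | .free p => {p}
  | .readNext _ q _ => {q}
  | .writeNext p _ _ => {p}
  | .readData _ q => {q}
  | .writeData p _ => {p}
  | .assert b => b.pvars
  | _ => ∅

/-- The action `act` raises a pointer race after `τ`. -/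
def isPRStep (seg : A) (τ : List (Act A D PV DV T n)) (act : Act A D PV DV T n) :
    Prop :=
  ∃ t com, act.tc = some (t, com) ∧ ∃ p ∈ racyVars com, PExp.var p ∉ validOf seg τ

/-- The computation `σ` is a pointer race. -/
def isPR (seg : A) (σ : List (Act A D PV DV T n)) : Prop :=
  ∃ τ act, σ = τ ++ [act] ∧ isPRStep seg τ act

/-- A set of computations is PRF if it contains no pointer race. -/
def SetPRF (seg : A) (S : Set (List (Act A D PV DV T n))) : Prop :=
  ∀ σ ∈ S, ¬ isPR seg σ

/-- A computation is PRF if none of its prefixes is a pointer race. -/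
def CompPRF (seg : A) (τ : List (Act A D PV DV T n)) : Prop :=
  ∀ σ, σ <+: τ → ¬ isPR seg σ

/-- The action `act` raises a strong pointer race after `τ`. -/
def isSPRStep (seg : A) (τ : List (Act A D PV DV T n)) (act : Act A D PV DV T n) :
    Prop :=
  ∃ t com, act.tc = some (t, com) ∧
    ((∃ p : PV,
        (com = .free p ∨ (∃ i q, com = .writeNext p i q) ∨ (∃ x, com = .writeData p x)) ∧
        PExp.var p ∉ validOf seg τ)
     ∨ (∃ q : PV,
        ((∃ p i, com = .readNext p q i) ∨ (∃ x, com = .readData x q)) ∧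
        Sum.inl q ∈ sinvOf seg τ)
     ∨ (∃ b, com = .assert b ∧
        ((∃ p ∈ Cond.pvars b, Sum.inl p ∈ sinvOf seg τ)
         ∨ (∃ x ∈ Cond.dvars b, Sum.inr x ∈ sinvOf seg τ))))

/-- The computation `σ` is a strong pointer race. -/
def isSPR (seg : A) (σ : List (Act A D PV DV T n)) : Prop :=
  ∃ τ act, σ = τ ++ [act] ∧ isSPRStep seg τ act

/-- A set of computations is SPRF if it contains no strong pointer race. -/
def SetSPRF (seg : A) (S : Set (List (Act A D PV DV T n))) : Prop :=
  ∀ σ ∈ S, ¬ isSPR seg σ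

/-- A computation is SPRF if none of its prefixes is a strong pointer race. -/
def CompSPRF (seg : A) (τ : List (Act A D PV DV T n)) : Prop :=
  ∀ σ, σ <+: τ → ¬ isSPR seg σ

/-- The action `act` extending `τ` violates ownership. -/
def violatesOwnership (seg : A) (P : Program D PV DV T n)
    (τ : List (Act A D PV DV T n)) (act : Act A D PV DV T n) : Prop :=
  ∃ t com, act.tc = some (t, com) ∧
    ∃ p : PV,
      (com = .free p ∨ (∃ i q, com = .writeNext p i q) ∨ (∃ x, com = .writeData p x)) ∧
      ∃ a t', (heapOf τ).pval (.var p) = some a ∧ ownedOf seg P τ a = some t' ∧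
        (t' ≠ t ∨ P.pOwner p = none)

/-- The ownership-respecting semantics resmmsem(P): the computations of
mmsem(P) none of whose actions violates ownership. -/
def resmmsem (seg : A) (P : Program D PV DV T n) : Set (List (Act A D PV DV T n)) :=
  {σ | σ ∈ mmsem seg P ∧ ∀ τ act, (τ ++ [act]) <+: σ → ¬ violatesOwnership seg P τ act}

/-- The extension of an address map to pointer expressions. -/
def mapPExp (f : A → A) : PExp A PV n → PExp A PV n
  | .var p => .var p
  | .next a i => .next (f a) i

/-- The extension of an address map to data expressions. -/
def mapDExp (f : A → A) : DExp A DV → DExp A DV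
  | .var x => .var x
  | .data a => .data (f a)

/-- `f` is a heap isomorphism from `h1` to `h2`: a bijection between the
addresses in use whose extension to expressions (with `f seg = seg`) is a
bijection between the domains and is compatible with the valuations. -/
structure IsHeapIso (seg : A) (h1 h2 : Heap A D PV DV n) (f : A → A) : Prop where
  fseg : f seg = seg
  adrBij : Set.BijOn f h1.adr h2.adr
  pdomBij : Set.BijOn (mapPExp f) h1.pdom h2.pdom
  ddomBij : Set.BijOn (mapDExp f) h1.ddom h2.ddom
  pcompat : ∀ pe ∈ h1.pdom, h2.pval (mapPExp f pe) = (h1.pval pe).map f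
  dcompat : ∀ de ∈ h1.ddom, h2.dval (mapDExp f de) = h1.dval de

/-- `h1 ≅ h2`. -/
def HeapIso (seg : A) (h1 h2 : Heap A D PV DV n) : Prop :=
  ∃ f, IsHeapIso seg h1 h2 f

/-- Heap equivalence of computations: same projection to (thread, command)
pairs and isomorphic valid-restricted heaps. -/
def heapEquiv (seg : A) (τ σ : List (Act A D PV DV T n)) : Prop :=
  τ.map Act.tc = σ.map Act.tc ∧
  HeapIso seg ((heapOf τ).restrict (validOf seg τ))
    ((heapOf σ).restrict (validOf seg σ))

/-- The owning pointers after `τ`: valid pointer expressions whose target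
is owned, together with valid next selectors of owned addresses. -/
def ownpOf (seg : A) (P : Program D PV DV T n) (τ : List (Act A D PV DV T n)) :
    Set (PExp A PV n) :=
  {pe | pe ∈ validOf seg τ ∧
    ((∃ a t, (heapOf τ).pval pe = some a ∧ ownedOf seg P τ a = some t)
     ∨ (∃ a i t, pe = PExp.next a i ∧ ownedOf seg P τ a = some t))}

/-- The target and source addresses of a pointer expression in a heap. -/
def exprAdrs (h : Heap A D PV DV n) (pe : PExp A PV n) : Set A :=
  {a | h.pval pe = some a} ∪ {a | PExp.srcAdr pe = some a}

/-- A set of owning pointers is coherent if owning pointers sharing a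
target or source address are included or excluded together. -/
def Coherent (seg : A) (P : Program D PV DV T n) (τ : List (Act A D PV DV T n))
    (O : Set (PExp A PV n)) : Prop :=
  ∀ pe ∈ ownpOf seg P τ, ∀ pe' ∈ ownpOf seg P τ,
    (∃ a, a ∈ exprAdrs (heapOf τ) pe ∧ a ∈ exprAdrs (heapOf τ) pe') →
    (pe ∈ O ↔ pe' ∈ O)

/-- The addresses occurring in a set of pointer expressions. -/
def adrsOfSet (h : Heap A D PV DV n) (O : Set (PExp A PV n)) : Set A :=
  ⋃ pe ∈ O, exprAdrs h pe


/-! ### Auxiliary development for Statement 10 -/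

section Aux

/-- "Freed ever": one step. -/
def feStep (seg : A) (h : Heap A D PV DV n) (F : Set A)
    (act : Act A D PV DV T n) : Set A :=
  match act.tc with
  | some (_, .free p) =>
      match h.pval (.var p) with
      | some a => if a = seg then F else insert a F
      | none => F
  | _ => F

def feAux (seg : A) : Heap A D PV DV n → Set A → List (Act A D PV DV T n) → Set A
  | _, F, [] => F
  | h, F, act :: τ => feAux seg (h.apply act.up) (feStep seg h F act) τ

/-- Addresses ever freed along a computation. -/
def feOf (seg : A) (τ : List (Act A D PV DV T n)) : Set A :=
  feAux seg Heap.empty ∅ τ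

lemma heapOf_concat (τ : List (Act A D PV DV T n)) (act : Act A D PV DV T n) :
    heapOf (τ ++ [act]) = (heapOf τ).apply act.up := by
  simp [heapOf]

lemma validAux_concat (seg : A) (h : Heap A D PV DV n) (V : Set (PExp A PV n))
    (τ : List (Act A D PV DV T n)) (act : Act A D PV DV T n) :
    validAux seg h V (τ ++ [act]) =
      validStep seg (τ.foldl (fun h a => h.apply a.up) h) (validAux seg h V τ) act := by
  induction τ generalizing h V with
  | nil => rfl
  | cons a τ ih => simpa [validAux] using ih _ _

lemma validOf_concat (seg : A) (τ : List (Act A D PV DV T n)) (act : Act A D PV DV T n) :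
    validOf seg (τ ++ [act]) = validStep seg (heapOf τ) (validOf seg τ) act :=
  validAux_concat seg _ _ τ act

lemma feAux_concat (seg : A) (h : Heap A D PV DV n) (F : Set A)
    (τ : List (Act A D PV DV T n)) (act : Act A D PV DV T n) :
    feAux seg h F (τ ++ [act]) =
      feStep seg (τ.foldl (fun h a => h.apply a.up) h) (feAux seg h F τ) act := by
  induction τ generalizing h F with
  | nil => rfl
  | cons a τ ih => simpa [feAux] using ih _ _

lemma feOf_concat (seg : A) (τ : List (Act A D PV DV T n)) (act : Act A D PV DV T n) :
    feOf seg (τ ++ [act]) = feStep seg (heapOf τ) (feOf seg τ) act :=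
  feAux_concat seg _ _ τ act

lemma CompPRF.prefix {seg : A} {τ : List (Act A D PV DV T n)} {act : Act A D PV DV T n}
    (h : CompPRF seg (τ ++ [act])) : CompPRF seg τ :=
  fun σ hσ => h σ (hσ.trans (List.prefix_append _ _))

lemma prf_last {seg : A} {τ : List (Act A D PV DV T n)} {act : Act A D PV DV T n}
    (hPRF : CompPRF seg (τ ++ [act])) (t : T) (com : Com D PV DV n)
    (htc : act.tc = some (t, com)) :
    ∀ p ∈ racyVars com, PExp.var p ∈ validOf seg τ := by
  intro p hp
  by_contra hc
  exact hPRF (τ ++ [act]) List.prefix_rfl ⟨τ, act, rfl, t, com, htc, p, hp, hc⟩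

/-! Pointwise lemmas about heap updates. -/

lemma apply_pt_pval (h : Heap A D PV DV n) (pe pe' : PExp A PV n) (a : A) :
    (h.apply (Update.pt pe a)).pval pe' = if pe' = pe then some a else h.pval pe' := by
  by_cases hc : pe' = pe <;> simp [Heap.apply, Update.pt, hc]

lemma apply_pt_dval (h : Heap A D PV DV n) (pe : PExp A PV n) (a : A) (de : DExp A DV) :
    (h.apply (Update.pt pe a)).dval de = h.dval de := by
  simp [Heap.apply, Update.pt]

lemma apply_dt_pval (h : Heap A D PV DV n) (de : DExp A DV) (d : D) (pe : PExp A PV n) :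
    (h.apply (Update.dt de d)).pval pe = h.pval pe := by
  simp [Heap.apply, Update.dt]

lemma apply_dt_dval (h : Heap A D PV DV n) (de de' : DExp A DV) (d : D) :
    (h.apply (Update.dt de d)).dval de' = if de' = de then some d else h.dval de' := by
  by_cases hc : de' = de <;> simp [Heap.apply, Update.dt, hc]

lemma apply_empty_pval (h : Heap A D PV DV n) (pe : PExp A PV n) :
    (h.apply Update.empty).pval pe = h.pval pe := rfl

lemma apply_empty_dval (h : Heap A D PV DV n) (de : DExp A DV) :
    (h.apply Update.empty).dval de = h.dval de := rfl

lemma apply_malloc_pval (h : Heap A D PV DV n) (seg : A) (p : PV) (a : A) (d : D)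
    (pe : PExp A PV n) :
    (h.apply (mallocUpdate seg p a d)).pval pe =
      if pe = PExp.var p then some a
      else if ∃ i, pe = PExp.next a i then some seg else h.pval pe := by
  by_cases h1 : pe = PExp.var p
  · simp [Heap.apply, mallocUpdate, h1]
  · by_cases h2 : ∃ i, pe = PExp.next a i <;>
      simp [Heap.apply, mallocUpdate, h1, h2]

lemma apply_malloc_dval (h : Heap A D PV DV n) (seg : A) (p : PV) (a : A) (d : D)
    (de : DExp A DV) :
    (h.apply (mallocUpdate seg p a d)).dval de =
      if de = DExp.data a then some d else h.dval de := by
  by_cases hc : de = DExp.data a <;>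
    simp [Heap.apply, mallocUpdate, hc]

lemma apply_base_pval (h : Heap A D PV DV n) (seg : A) (dinit : DV → D)
    (pe : PExp A PV n) :
    (h.apply (baseUpdate seg dinit)).pval pe =
      match pe with | .var _ => some seg | .next a i => h.pval (.next a i) := by
  cases pe <;> simp [Heap.apply, baseUpdate]

/-- Evaluation of `validStep` on a malloc action with the (Malloc1) update. -/
lemma validStep_malloc (seg : A) (h : Heap A D PV DV n) (V : Set (PExp A PV n))
    (t : T) (p : PV) (a : A) (d : D) :
    validStep seg h V ⟨some (t, .malloc p), mallocUpdate seg p a d⟩ =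
      insert (PExp.var p) V ∪ {pe | ∃ i, pe = PExp.next a i} := by
  have hp : (mallocUpdate (DV := DV) (n := n) seg p a d).pup (PExp.var p) = some a := by
    simp [mallocUpdate]
  simp only [validStep, hp]
  congr 1
  ext pe
  simp only [Set.mem_setOf_eq]
  constructor
  · rintro ⟨i, rfl, -⟩; exact ⟨i, rfl⟩
  · rintro ⟨i, rfl⟩
    refine ⟨i, rfl, ?_⟩
    simp [mallocUpdate]

/-- Membership of an address in `Heap.adr` via the range of `pval`. -/
lemma mem_adr_of_pval {h : Heap A D PV DV n} {pe : PExp A PV n} {a : A}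
    (hp : h.pval pe = some a) : a ∈ h.adr :=
  Or.inr (Or.inl ⟨pe, hp⟩)

lemma mem_adr_of_dval {h : Heap A D PV DV n} {a : A}
    (hd : h.dval (.data a) ≠ none) : a ∈ h.adr :=
  Or.inr (Or.inr ⟨.data a, hd, rfl⟩)

/-- The invariant carried through the induction. -/
structure Inv (seg : A) (σ : List (Act A D PV DV T n)) : Prop where
  valid_not_freed : ∀ pe a, pe ∈ validOf seg σ → (heapOf σ).pval pe = some a →
    a ≠ seg → a ∉ feOf seg σ
  invalid_seg : ∀ pe, pe ∉ validOf seg σ → (heapOf σ).pval pe = some seg →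
    ∃ a i, pe = PExp.next a i ∧ a ∈ feOf seg σ
  val_data : ∀ pe a, (heapOf σ).pval pe = some a → a ≠ seg →
    (heapOf σ).dval (.data a) ≠ none
  freed_data : ∀ a ∈ feOf seg σ, (heapOf σ).dval (.data a) ≠ none

theorem sem_inv (seg : A) (P : Program D PV DV T n) {σ : List (Act A D PV DV T n)}
    {ctrl : T → P.Ctrl} (hsem : Sem seg P false σ ctrl) (hPRF : CompPRF seg σ) :
    Inv seg σ := by
  induction hsem with
  | base dinit =>
      have hF : feOf seg [(⟨none, baseUpdate seg dinit⟩ : Act A D PV DV T n)] = ∅ := rfl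
      have hH : heapOf [(⟨none, baseUpdate seg dinit⟩ : Act A D PV DV T n)] =
          Heap.apply Heap.empty (baseUpdate seg dinit) := rfl
      constructor
      · intro pe a _ _ _; rw [hF]; exact Set.notMem_empty a
      · intro pe hpe hseg
        exfalso
        cases pe with
        | var p => exact hpe ⟨p, rfl⟩
        | next b i =>
            rw [hH, apply_base_pval] at hseg
            simp [Heap.empty] at hseg
      · intro pe a hpa hane
        exfalso
        rw [hH, apply_base_pval] at hpa
        cases pe with
        | var p => exact hane (Option.some.inj hpa).symm
        | next b i => simp [Heap.empty] at hpa
      · intro a ha; rw [hF] at ha; exact absurd ha (Set.notMem_empty a)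
  | assert t b c' hs hstep hsat ih =>
      rename_i τ' ctrl'
      have IH := ih hPRF.prefix
      constructor <;>
        simp only [validOf_concat, feOf_concat, heapOf_concat, validStep, feStep,
          apply_empty_pval, apply_empty_dval]
      · exact IH.valid_not_freed
      · exact IH.invalid_seg
      · exact IH.val_data
      · exact IH.freed_data
  | free t p c' hs hstep ih =>
      rename_i τ' ctrl'
      have IH := ih hPRF.prefix
      have hpv : PExp.var p ∈ validOf seg τ' :=
        prf_last hPRF t (.free p) rfl p (by simp [racyVars])
      constructor <;>
        simp only [validOf_concat, feOf_concat, heapOf_concat, validStep, feStep,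
          apply_empty_pval, apply_empty_dval]
      all_goals
        rcases hc : (heapOf τ').pval (PExp.var p) with _ | c
      · exact IH.valid_not_freed
      · by_cases hcs : c = seg
        · simp only [hcs, if_pos rfl]; exact IH.valid_not_freed
        · simp only [if_neg hcs]
          intro pe a hpe hpa hane
          have hne : a ≠ c := by
            rintro rfl
            exact hpe.2 (Or.inl hpa)
          intro hmem
          rcases hmem with rfl | hmem
          · exact hne rfl
          · exact IH.valid_not_freed pe a hpe.1 hpa hane hmem
      · exact IH.invalid_seg
      · by_cases hcs : c = seg
        · simp only [hcs, if_pos rfl]; exact IH.invalid_seg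
        · simp only [if_neg hcs]
          intro pe hpe hseg
          by_cases hpV : pe ∈ validOf seg τ'
          · have : pe ∈ invalidOf (heapOf τ') c := by
              by_contra hni
              exact hpe ⟨hpV, hni⟩
            rcases this with h1 | h2
            · exfalso
              rw [Set.mem_setOf_eq, hseg] at h1
              exact hcs (Option.some.inj h1).symm
            · rcases h2 with ⟨i, rfl⟩
              exact ⟨c, i, rfl, Or.inl rfl⟩
          · obtain ⟨a, i, rfl, haF⟩ := IH.invalid_seg pe hpV hseg
            exact ⟨a, i, rfl, Or.inr haF⟩
      · exact IH.val_data
      · exact IH.val_data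
      · exact IH.freed_data
      · by_cases hcs : c = seg
        · simp only [hcs, if_pos rfl]; exact IH.freed_data
        · simp only [if_neg hcs]
          intro a ha
          rcases ha with rfl | ha
          · exact IH.val_data _ a hc hcs
          · exact IH.freed_data a ha
  | copyP t p q c' b hs hstep hb ih =>
      rename_i τ' ctrl'
      have IH := ih hPRF.prefix
      constructor <;>
        simp only [validOf_concat, feOf_concat, heapOf_concat, validStep, feStep,
          apply_pt_dval]
      · intro pe a hpe hpa hane
        rw [apply_pt_pval] at hpa
        by_cases hq : PExp.var q ∈ validOf seg τ'
        · simp only [if_pos hq] at hpe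
          rcases hpe with rfl | hpe
          · rw [if_pos rfl] at hpa
            exact IH.valid_not_freed _ a hq (hb.trans (congrArg some (Option.some.inj hpa)))
              hane
          · by_cases hep : pe = PExp.var p
            · subst hep
              rw [if_pos rfl] at hpa
              exact IH.valid_not_freed _ a hq (hb.trans (congrArg some (Option.some.inj hpa)))
                hane
            · rw [if_neg hep] at hpa
              exact IH.valid_not_freed pe a hpe hpa hane
        · simp only [if_neg hq] at hpe
          have hep : pe ≠ PExp.var p := fun h => hpe.2 h
          rw [if_neg hep] at hpa
          exact IH.valid_not_freed pe a hpe.1 hpa hane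
      · intro pe hpe hseg
        rw [apply_pt_pval] at hseg
        by_cases hq : PExp.var q ∈ validOf seg τ'
        · simp only [if_pos hq] at hpe
          have hep : pe ≠ PExp.var p := fun h => hpe (h ▸ Set.mem_insert _ _)
          rw [if_neg hep] at hseg
          exact IH.invalid_seg pe (fun h => hpe (Set.mem_insert_of_mem _ h)) hseg
        · simp only [if_neg hq] at hpe
          by_cases hep : pe = PExp.var p
          · subst hep
            rw [if_pos rfl] at hseg
            have hbs : b = seg := Option.some.inj hseg
            obtain ⟨a, i, heq, -⟩ := IH.invalid_seg (PExp.var q) hq (hbs ▸ hb)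
            exact absurd heq (by simp)
          · rw [if_neg hep] at hseg
            exact IH.invalid_seg pe (fun h => hpe ⟨h, hep⟩) hseg
      · intro pe a hpa hane
        rw [apply_pt_pval] at hpa
        by_cases hep : pe = PExp.var p
        · rw [if_pos hep] at hpa
          exact IH.val_data _ a (hb.trans (congrArg some (Option.some.inj hpa))) hane
        · rw [if_neg hep] at hpa
          exact IH.val_data pe a hpa hane
      · exact IH.freed_data
  | readNext t p q i c' a0 b hs hstep hq0 ha0 hni ih =>
      rename_i τ' ctrl'
      have IH := ih hPRF.prefix
      have hqv : PExp.var q ∈ validOf seg τ' :=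
        prf_last hPRF t (.readNext p q i) rfl q (by simp [racyVars])
      constructor <;>
        simp only [validOf_concat, feOf_concat, heapOf_concat, validStep, feStep,
          apply_pt_dval, hq0]
      · intro pe a hpe hpa hane
        rw [apply_pt_pval] at hpa
        by_cases hn : PExp.next a0 i ∈ validOf seg τ'
        · simp only [if_pos hn] at hpe
          by_cases hep : pe = PExp.var p
          · subst hep
            rw [if_pos rfl] at hpa
            exact IH.valid_not_freed _ a hn (hni.trans (congrArg some (Option.some.inj hpa)))
              hane
          · rw [if_neg hep] at hpa
            rcases hpe with h1 | hpe
            · exact absurd h1 hep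
            · exact IH.valid_not_freed pe a hpe hpa hane
        · simp only [if_neg hn] at hpe
          have hep : pe ≠ PExp.var p := fun h => hpe.2 h
          rw [if_neg hep] at hpa
          exact IH.valid_not_freed pe a hpe.1 hpa hane
      · intro pe hpe hseg
        rw [apply_pt_pval] at hseg
        by_cases hn : PExp.next a0 i ∈ validOf seg τ'
        · simp only [if_pos hn] at hpe
          have hep : pe ≠ PExp.var p := fun h => hpe (h ▸ Set.mem_insert _ _)
          rw [if_neg hep] at hseg
          exact IH.invalid_seg pe (fun h => hpe (Set.mem_insert_of_mem _ h)) hseg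
        · simp only [if_neg hn] at hpe
          by_cases hep : pe = PExp.var p
          · subst hep
            rw [if_pos rfl] at hseg
            have hbs : b = seg := Option.some.inj hseg
            obtain ⟨a', i', heq, haF⟩ := IH.invalid_seg (PExp.next a0 i) hn (hbs ▸ hni)
            have : a0 ∈ feOf seg τ' := by
              obtain ⟨h1, -⟩ := PExp.next.inj heq
              exact h1 ▸ haF
            exact absurd this (IH.valid_not_freed _ a0 hqv hq0 ha0)
          · rw [if_neg hep] at hseg
            exact IH.invalid_seg pe (fun h => hpe ⟨h, hep⟩) hseg
      · intro pe a hpa hane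
        rw [apply_pt_pval] at hpa
        by_cases hep : pe = PExp.var p
        · rw [if_pos hep] at hpa
          exact IH.val_data _ a (hni.trans (congrArg some (Option.some.inj hpa))) hane
        · rw [if_neg hep] at hpa
          exact IH.val_data pe a hpa hane
      · exact IH.freed_data
  | writeNext t p i q c' a0 b hs hstep hp0 ha0 hq0 ih =>
      rename_i τ' ctrl'
      have IH := ih hPRF.prefix
      have hpv : PExp.var p ∈ validOf seg τ' :=
        prf_last hPRF t (.writeNext p i q) rfl p (by simp [racyVars])
      constructor <;>
        simp only [validOf_concat, feOf_concat, heapOf_concat, validStep, feStep,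
          apply_pt_dval, hp0]
      · intro pe a hpe hpa hane
        rw [apply_pt_pval] at hpa
        by_cases hqv : PExp.var q ∈ validOf seg τ'
        · simp only [if_pos hqv] at hpe
          by_cases hep : pe = PExp.next a0 i
          · subst hep
            rw [if_pos rfl] at hpa
            exact IH.valid_not_freed _ a hqv (hq0.trans (congrArg some (Option.some.inj hpa)))
              hane
          · rw [if_neg hep] at hpa
            rcases hpe with h1 | hpe
            · exact absurd h1 hep
            · exact IH.valid_not_freed pe a hpe hpa hane
        · simp only [if_neg hqv] at hpe
          have hep : pe ≠ PExp.next a0 i := fun h => hpe.2 h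
          rw [if_neg hep] at hpa
          exact IH.valid_not_freed pe a hpe.1 hpa hane
      · intro pe hpe hseg
        rw [apply_pt_pval] at hseg
        by_cases hqv : PExp.var q ∈ validOf seg τ'
        · simp only [if_pos hqv] at hpe
          have hep : pe ≠ PExp.next a0 i := fun h => hpe (h ▸ Set.mem_insert _ _)
          rw [if_neg hep] at hseg
          exact IH.invalid_seg pe (fun h => hpe (Set.mem_insert_of_mem _ h)) hseg
        · simp only [if_neg hqv] at hpe
          by_cases hep : pe = PExp.next a0 i
          · subst hep
            rw [if_pos rfl] at hseg
            have hbs : b = seg := Option.some.inj hseg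
            obtain ⟨a', i', heq, -⟩ := IH.invalid_seg (PExp.var q) hqv (hbs ▸ hq0)
            exact absurd heq (by simp)
          · rw [if_neg hep] at hseg
            exact IH.invalid_seg pe (fun h => hpe ⟨h, hep⟩) hseg
      · intro pe a hpa hane
        rw [apply_pt_pval] at hpa
        by_cases hep : pe = PExp.next a0 i
        · rw [if_pos hep] at hpa
          exact IH.val_data _ a (hq0.trans (congrArg some (Option.some.inj hpa))) hane
        · rw [if_neg hep] at hpa
          exact IH.val_data pe a hpa hane
      · exact IH.freed_data
  | readData t x q c' a0 d hs hstep hq0 ha0 hd0 ih =>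
      rename_i τ' ctrl'
      have IH := ih hPRF.prefix
      constructor <;>
        simp only [validOf_concat, feOf_concat, heapOf_concat, validStep, feStep,
          apply_dt_pval, apply_dt_dval]
      · exact IH.valid_not_freed
      · exact IH.invalid_seg
      · intro pe a hpa hane
        have := IH.val_data pe a hpa hane
        simp only [if_neg (by simp : (DExp.data a : DExp A DV) ≠ DExp.var x)]
        exact this
      · intro a ha
        simp only [if_neg (by simp : (DExp.data a : DExp A DV) ≠ DExp.var x)]
        exact IH.freed_data a ha
  | writeData t q x c' a0 d hs hstep hq0 ha0 hd0 ih =>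
      rename_i τ' ctrl'
      have IH := ih hPRF.prefix
      constructor <;>
        simp only [validOf_concat, feOf_concat, heapOf_concat, validStep, feStep,
          apply_dt_pval, apply_dt_dval]
      · exact IH.valid_not_freed
      · exact IH.invalid_seg
      · intro pe a hpa hane
        by_cases hca : (DExp.data a : DExp A DV) = DExp.data a0
        · rw [if_pos hca]; simp
        · rw [if_neg hca]; exact IH.val_data pe a hpa hane
      · intro a ha
        by_cases hca : (DExp.data a : DExp A DV) = DExp.data a0
        · rw [if_pos hca]; simp
        · rw [if_neg hca]; exact IH.freed_data a ha
  | opAsgn t x ys op c' ds hs hstep hds ih =>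
      rename_i τ' ctrl'
      have IH := ih hPRF.prefix
      constructor <;>
        simp only [validOf_concat, feOf_concat, heapOf_concat, validStep, feStep,
          apply_dt_pval, apply_dt_dval]
      · exact IH.valid_not_freed
      · exact IH.invalid_seg
      · intro pe a hpa hane
        simp only [if_neg (by simp : (DExp.data a : DExp A DV) ≠ DExp.var x)]
        exact IH.val_data pe a hpa hane
      · intro a ha
        simp only [if_neg (by simp : (DExp.data a : DExp A DV) ≠ DExp.var x)]
        exact IH.freed_data a ha
  | malloc1 t p c' a d hs hstep hfresh ih =>
      rename_i τ' ctrl'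
      have IH := ih hPRF.prefix
      have haF : a ∉ feOf seg τ' := fun h => hfresh (mem_adr_of_dval (IH.freed_data a h))
      constructor <;>
        simp only [validOf_concat, feOf_concat, heapOf_concat, validStep_malloc, feStep]
      · intro pe b hpe hpb hbne
        rw [apply_malloc_pval] at hpb
        by_cases h1 : pe = PExp.var p
        · rw [if_pos h1] at hpb
          exact (Option.some.inj hpb) ▸ haF
        · rw [if_neg h1] at hpb
          by_cases h2 : ∃ i, pe = PExp.next a i
          · rw [if_pos h2] at hpb
            exact absurd (Option.some.inj hpb).symm hbne
          · rw [if_neg h2] at hpb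
            rcases hpe with (h3 | h3) | h3
            · exact absurd h3 h1
            · exact IH.valid_not_freed pe b h3 hpb hbne
            · exact absurd h3 h2
      · intro pe hpe hseg
        rw [apply_malloc_pval] at hseg
        have h1 : pe ≠ PExp.var p := fun h =>
          hpe (Or.inl (h ▸ Set.mem_insert _ _))
        have h2 : ¬ ∃ i, pe = PExp.next a i := fun h => hpe (Or.inr h)
        rw [if_neg h1, if_neg h2] at hseg
        exact IH.invalid_seg pe (fun h => hpe (Or.inl (Set.mem_insert_of_mem _ h))) hseg
      · intro pe b hpb hbne
        rw [apply_malloc_pval] at hpb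
        rw [apply_malloc_dval]
        by_cases h1 : pe = PExp.var p
        · rw [if_pos h1] at hpb
          rw [if_pos (by rw [Option.some.inj hpb])]
          simp
        · rw [if_neg h1] at hpb
          by_cases h2 : ∃ i, pe = PExp.next a i
          · rw [if_pos h2] at hpb
            exact absurd (Option.some.inj hpb).symm hbne
          · rw [if_neg h2] at hpb
            by_cases h3 : (DExp.data b : DExp A DV) = DExp.data a
            · rw [if_pos h3]; simp
            · rw [if_neg h3]; exact IH.val_data pe b hpb hbne
      · intro b hb
        rw [apply_malloc_dval]
        by_cases h3 : (DExp.data b : DExp A DV) = DExp.data a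
        · rw [if_pos h3]; simp
        · rw [if_neg h3]; exact IH.freed_data b hb
  | malloc2 t p c' a hmm hs hstep hmem ih => exact absurd hmm (by simp)

end Aux

/-- in a PRF computation under garbage collection, invalid
next selectors of cells referenced by valid pointers never hold `seg`. -/
theorem invalid_next_not_seg (seg : A) (P : Program D PV DV T n)
    (σ : List (Act A D PV DV T n)) (hσ : σ ∈ gcsem seg P)
    (hPRF : CompPRF seg σ) (pe : PExp A PV n) (hpe : pe ∈ validOf seg σ)
    (a : A) (ha : (heapOf σ).pval pe = some a) (hane : a ≠ seg) (i : Fin n)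
    (hinv : PExp.next a i ∉ validOf seg σ) :
    (heapOf σ).pval (PExp.next a i) ≠ some seg := by
  obtain ⟨ctrl, hsem⟩ := hσ
  have IH := sem_inv seg P hsem hPRF
  intro hseg
  obtain ⟨a', i', heq, haF⟩ := IH.invalid_seg (PExp.next a i) hinv hseg
  obtain ⟨h1, -⟩ := PExp.next.inj heq
  exact IH.valid_not_freed pe a hpe ha hane (h1 ▸ haF)

end

end PRF
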